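/- Let X := ℤ³ × ℂ³ × (ℂ ∖ {0,1}), and define the bijections σ₀, σ₁, σ₂, σ₃ of X by σ₀(k,l,m; a,b,c; x) = (−k,−l,−m; a+k, b+l, c+m; x), σ₁(k,l,m; a,b,c; x) = (m−k, l, m; c−a, b, c; x/(x−1)), σ₂(k,l,m; a,b,c; x) = (k, l, k+l−m; a, b, a+b+1−c; 1−x), and σ₃(k,l,m; a,b,c; x) = (l, k, m; b, a, c; x). Then the subgroup G of the permutation group of X generated by σ₀, σ₁, σ₂, σ₃ has exactly 96 elements. -/

import Mathlib

/-- The set `X = ℤ³ × ℂ³ × (ℂ ∖ {0,1})`. -/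
abbrev Xset : Type := (ℤ × ℤ × ℤ) × (ℂ × ℂ × ℂ) × {x : ℂ // x ≠ 0 ∧ x ≠ 1}

namespace Xset

lemma mobius_mem {x : ℂ} (hx : x ≠ 0 ∧ x ≠ 1) : x / (x - 1) ≠ 0 ∧ x / (x - 1) ≠ 1 := by
  have h1 : x - 1 ≠ 0 := sub_ne_zero.mpr hx.2
  refine ⟨div_ne_zero hx.1 h1, fun h => ?_⟩
  have hx' : x = x - 1 := (div_eq_one_iff_eq h1).mp h
  exact one_ne_zero (by linear_combination hx')

lemma one_sub_mem {x : ℂ} (hx : x ≠ 0 ∧ x ≠ 1) : (1 : ℂ) - x ≠ 0 ∧ (1 : ℂ) - x ≠ 1 := by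
  refine ⟨sub_ne_zero.mpr (Ne.symm hx.2), fun h => hx.1 (by linear_combination -h)⟩

def f0 : Xset → Xset :=
  fun p => ⟨⟨-p.1.1, -p.1.2.1, -p.1.2.2⟩,
    ⟨p.2.1.1 + p.1.1, p.2.1.2.1 + p.1.2.1, p.2.1.2.2 + p.1.2.2⟩, p.2.2⟩

lemma f0_inv : Function.Involutive f0 := by
  rintro ⟨⟨k, l, m⟩, ⟨a, b, c⟩, x⟩
  simp only [f0, neg_neg, Prod.mk.injEq, Subtype.mk.injEq]
  refine ⟨trivial, ⟨?_, ?_, ?_⟩, trivial⟩ <;> push_cast <;> ring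

noncomputable def f1 : Xset → Xset :=
  fun p => ⟨⟨p.1.2.2 - p.1.1, p.1.2.1, p.1.2.2⟩,
    ⟨p.2.1.2.2 - p.2.1.1, p.2.1.2.1, p.2.1.2.2⟩,
    ⟨p.2.2.1 / (p.2.2.1 - 1), mobius_mem p.2.2.2⟩⟩

lemma f1_inv : Function.Involutive f1 := by
  rintro ⟨⟨k, l, m⟩, ⟨a, b, c⟩, ⟨x, hx⟩⟩
  have h1 : x - 1 ≠ 0 := sub_ne_zero.mpr hx.2
  have h2 : x / (x - 1) - 1 ≠ 0 := sub_ne_zero.mpr (mobius_mem hx).2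
  simp only [f1, Prod.mk.injEq, Subtype.mk.injEq]
  refine ⟨⟨by ring, trivial⟩, ⟨by ring, trivial⟩, ?_⟩
  field_simp
  ring

noncomputable def f2 : Xset → Xset :=
  fun p => ⟨⟨p.1.1, p.1.2.1, p.1.1 + p.1.2.1 - p.1.2.2⟩,
    ⟨p.2.1.1, p.2.1.2.1, p.2.1.1 + p.2.1.2.1 + 1 - p.2.1.2.2⟩,
    ⟨1 - p.2.2.1, one_sub_mem p.2.2.2⟩⟩

lemma f2_inv : Function.Involutive f2 := by
  rintro ⟨⟨k, l, m⟩, ⟨a, b, c⟩, ⟨x, hx⟩⟩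
  simp only [f2, Prod.mk.injEq, Subtype.mk.injEq]
  exact ⟨⟨trivial, trivial, by ring⟩, ⟨trivial, trivial, by ring⟩, by ring⟩

def f3 : Xset → Xset :=
  fun p => ⟨⟨p.1.2.1, p.1.1, p.1.2.2⟩, ⟨p.2.1.2.1, p.2.1.1, p.2.1.2.2⟩, p.2.2⟩

lemma f3_inv : Function.Involutive f3 := by
  rintro ⟨⟨k, l, m⟩, ⟨a, b, c⟩, x⟩
  rfl

/-- `σ₀(k,l,m; a,b,c; x) = (−k,−l,−m; a+k, b+l, c+m; x)`. -/
noncomputable def s0 : Equiv.Perm Xset := f0_inv.toPerm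
/-- `σ₁(k,l,m; a,b,c; x) = (m−k, l, m; c−a, b, c; x/(x−1))`. -/
noncomputable def s1 : Equiv.Perm Xset := f1_inv.toPerm
/-- `σ₂(k,l,m; a,b,c; x) = (k, l, k+l−m; a, b, a+b+1−c; 1−x)`. -/
noncomputable def s2 : Equiv.Perm Xset := f2_inv.toPerm
/-- `σ₃(k,l,m; a,b,c; x) = (l, k, m; b, a, c; x)`. -/
noncomputable def s3 : Equiv.Perm Xset := f3_inv.toPerm

end Xset


/-!
In the coordinates `λ = 1 - c`, `μ = c - a - b`, `ν = a - b` (the exponent differences of the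
hypergeometric equation at `0, 1, ∞`), and in the same linear forms of `(k, l, m)`, the maps
`σ₁`, `σ₂` act as transpositions and `σ₃` as a sign change, while on `x` they permute the three
points `0, 1, ∞` in the same way. After shifting `(a, b, c)` by half of `(k, l, m)`, `σ₀` only
negates the `(k, l, m)`-coordinates. Hence `G ≅ {±1} × B₃`, where `B₃ = {±1}³ ⋊ S₃` is the
hyperoctahedral group, and `|G| = 2 · 2³ · 3! = 96`. Formally, the pairs `(g, m)` for which `g`
acts on coordinates as `m` form a subgroup of `Perm X × ({±1} × B₃)` with injective projections,
containing `(σᵢ, mᵢ)` for generators `mᵢ` of `{±1} × B₃`.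
-/

open Equiv

abbrev SignedPerm (n : ℕ) := (Fin n → ℤˣ) ⋊[mulAutArrow] Perm (Fin n)

namespace SignedPerm
open SemidirectProduct Subgroup

variable {n : ℕ}

instance : MulAction (SignedPerm n) (Fin n → ℂ) where
  smul b v i := ((b.left i : ℤ) : ℂ) * v (b.right⁻¹ i)
  one_smul v := by
    ext i
    change ((1 : ℤˣ) : ℤ) * v _ = v i
    simp
  mul_smul b b' v := by
    ext i
    change ((((b * b').left i : ℤˣ) : ℤ) : ℂ) * v ((b * b').right⁻¹ i) =
      ((b.left i : ℤ) : ℂ) * (((b'.left (b.right⁻¹ i) : ℤ) : ℂ) * v (b'.right⁻¹ (b.right⁻¹ i)))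
    simp only [mul_left, mul_right, mul_inv_rev, Perm.mul_apply, Pi.mul_apply, Units.val_mul,
      Int.cast_mul, mul_assoc]
    rfl

lemma smul_apply (b : SignedPerm n) (v : Fin n → ℂ) (i : Fin n) :
    (b • v) i = ((b.left i : ℤ) : ℂ) * v (b.right⁻¹ i) := rfl

instance : SMulCommClass (SignedPerm n) ℂ (Fin n → ℂ) where
  smul_comm b c v := by
    ext i
    simp only [smul_apply, Pi.smul_apply, smul_eq_mul]
    ring

lemma card : Nat.card (SignedPerm n) = 2 ^ n * n.factorial := by
  rw [SemidirectProduct.card, Nat.card_fun, Nat.card_perm]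
  simp [Nat.card_eq_fintype_card, Fintype.card_units_int]

lemma mulAutArrow_mulSingle (σ : Perm (Fin n)) (i : Fin n) (u : ℤˣ) :
    mulAutArrow σ (Pi.mulSingle i u) = Pi.mulSingle (σ i) u := by
  ext a : 1
  show Pi.mulSingle (M := fun _ => ℤˣ) i u (σ⁻¹ a) = _
  simp only [Pi.mulSingle_apply, Perm.inv_eq_iff_eq]

lemma eq_top_of_mem {K : Subgroup (SignedPerm (n + 1))}
    (hflip : inl (Pi.mulSingle (Fin.last n) (-1)) ∈ K)
    (hswap : ∀ i : Fin n, inr (swap i.castSucc i.succ) ∈ K) : K = ⊤ := by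
  have hperm (σ : Perm (Fin (n + 1))) : inr σ ∈ K := by
    have hσ : σ ∈ closure (Set.range fun i : Fin n => swap i.castSucc i.succ) := by
      rw [closure_eq_top_of_mclosure_eq_top (Perm.mclosure_swap_castSucc_succ n)]
      exact mem_top σ
    have := mem_map_of_mem (inr : Perm (Fin (n + 1)) →* SignedPerm (n + 1)) hσ
    rw [MonoidHom.map_closure, ← Set.range_comp] at this
    exact closure_le K |>.2 (Set.range_subset_iff.2 hswap) this
  have hflips (i : Fin (n + 1)) : inl (Pi.mulSingle i (-1)) ∈ K := by
    have h := mul_mem (mul_mem (hperm (swap (Fin.last n) i)) hflip)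
      (hperm (swap (Fin.last n) i)⁻¹)
    rwa [← inl_aut, mulAutArrow_mulSingle, swap_apply_left] at h
  have hsigns (f : Fin (n + 1) → ℤˣ) : f ∈ K.comap inl := by
    rw [← Finset.univ_prod_mulSingle f]
    refine prod_mem fun i _ => ?_
    rcases Int.units_eq_one_or (f i) with h | h
    · simp [h]
    · rw [h]
      exact hflips i
  exact eq_top_iff.2 fun b _ => inl_left_mul_inr_right b ▸ mul_mem (hsigns _) (hperm _)

lemma eq_one_of_smul_eq_self {b : SignedPerm n} {w : Fin n → ℂ} (hw0 : ∀ i, w i ≠ 0)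
    (hw : ∀ i j, w i ^ 2 = w j ^ 2 → i = j) (h : b • w = w) : b = 1 := by
  have hi (i : Fin n) : ((b.left i : ℤ) : ℂ) * w (b.right⁻¹ i) = w i := congrFun h i
  have hsq (u : ℤˣ) : ((u : ℤ) : ℂ) ^ 2 = 1 := by
    rcases Int.units_eq_one_or u with rfl | rfl <;> norm_num
  have hright (i : Fin n) : b.right⁻¹ i = i :=
    hw _ _ (by rw [← hi i, mul_pow, hsq, one_mul])
  have hleft (i : Fin n) : b.left i = 1 := by
    have := hi i
    rw [hright i, mul_left_eq_self₀] at this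
    exact Units.val_eq_one.mp (by exact_mod_cast this.resolve_right (hw0 i))
  exact SemidirectProduct.ext (funext hleft) (inv_eq_one.mp (Perm.ext hright))

lemma inr_swap_zero_one_smul (x y z : ℂ) :
    (inr (swap 0 1) : SignedPerm 3) • ![x, y, z] = ![y, x, z] := by
  ext i; fin_cases i <;> simp [smul_apply, swap_apply_of_ne_of_ne]

lemma inr_swap_one_two_smul (x y z : ℂ) :
    (inr (swap 1 2) : SignedPerm 3) • ![x, y, z] = ![x, z, y] := by
  ext i; fin_cases i <;> simp [smul_apply, swap_apply_of_ne_of_ne]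

lemma inl_mulSingle_two_smul (x y z : ℂ) :
    (inl (Pi.mulSingle 2 (-1)) : SignedPerm 3) • ![x, y, z] = ![x, y, -z] := by
  ext i; fin_cases i <;> simp [smul_apply]

instance : MulAction (ℤˣ × SignedPerm n) ((Fin n → ℂ) × (Fin n → ℂ)) where
  smul m y := (((m.1 : ℤ) : ℂ) • m.2 • y.1, m.2 • y.2)
  one_smul y := by
    change ((((1 : ℤˣ) : ℤ) : ℂ) • (1 : SignedPerm n) • y.1, (1 : SignedPerm n) • y.2) = y
    simp
  mul_smul m m' y := by
    change ((((m.1 * m'.1 : ℤˣ) : ℤ) : ℂ) • (m.2 * m'.2) • y.1, (m.2 * m'.2) • y.2) =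
      ((((m.1 : ℤ) : ℂ)) • m.2 • (((m'.1 : ℤ) : ℂ) • m'.2 • y.1), m.2 • m'.2 • y.2)
    rw [mul_smul, mul_smul, smul_comm m.2 (((m'.1 : ℤ) : ℂ))]
    push_cast
    simp only [smul_smul]

lemma prod_smul_def (m : ℤˣ × SignedPerm n)
    (y : (Fin n → ℂ) × (Fin n → ℂ)) : m • y = (((m.1 : ℤ) : ℂ) • m.2 • y.1, m.2 • y.2) := rfl

end SignedPerm

namespace Subgroup

variable {G H : Type*} [Group G] [Group H]

lemma card_map_of_injOn (f : G →* H) (K : Subgroup G) (hf : Set.InjOn f K) :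
    Nat.card (K.map f) = Nat.card K :=
  Nat.card_image_of_injOn hf

lemma card_closure_image_fst_eq (R : Subgroup (G × H))
    (hfst : Set.InjOn Prod.fst (R : Set (G × H))) (hsnd : Set.InjOn Prod.snd (R : Set (G × H)))
    {S : Set (G × H)} (hS : S ⊆ R) :
    Nat.card (closure (Prod.fst '' S)) = Nat.card (closure (Prod.snd '' S)) := by
  have hSR : (closure S : Set (G × H)) ⊆ R := closure_le R |>.2 hS
  rw [← MonoidHom.coe_fst, ← MonoidHom.coe_snd, ← MonoidHom.map_closure, ← MonoidHom.map_closure,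
    card_map_of_injOn _ _ (hfst.mono hSR), card_map_of_injOn _ _ (hsnd.mono hSR)]

lemma eq_top_of_neg_one_mem {K : Subgroup (ℤˣ × H)} (hneg : ((-1 : ℤˣ), (1 : H)) ∈ K)
    (hinr : K.comap (MonoidHom.inr ℤˣ H) = ⊤) : K = ⊤ := by
  refine eq_top_iff.2 fun ⟨ε, b⟩ _ => ?_
  rw [show (ε, b) = (ε, 1) * (1, b) by simp]
  refine mul_mem ?_ (show b ∈ K.comap (MonoidHom.inr ℤˣ H) from hinr ▸ mem_top b)
  rcases Int.units_eq_one_or ε with rfl | rfl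
  · exact one_mem _
  · exact hneg

end Subgroup

namespace Xset
open SemidirectProduct SignedPerm Matrix

def expDiff (a b c : ℂ) : Fin 3 → ℂ := ![-c, c - a - b, a - b]

lemma expDiff_inj {a b c a' b' c' : ℂ} :
    expDiff a b c = expDiff a' b' c' ↔ a = a' ∧ b = b' ∧ c = c' := by
  refine ⟨fun h => ?_, by rintro ⟨rfl, rfl, rfl⟩; rfl⟩
  have h0 := congrFun h 0
  have h1 := congrFun h 1
  have h2 := congrFun h 2
  simp only [expDiff, Fin.isValue, cons_val, neg_inj] at h0 h1 h2
  exact ⟨by linear_combination (h0 - h1 + h2) / 2, by linear_combination (h0 - h1 - h2) / 2, h0⟩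

/-- `(1/2, 1/2, 1)` is the common fixed point of the affine actions of `σ₁, σ₂, σ₃` on `(a, b, c)`,
and the shift by half of `(k, l, m)` makes `σ₀` act trivially on the second component. -/
noncomputable def coords (p : Xset) : (Fin 3 → ℂ) × (Fin 3 → ℂ) :=
  (expDiff p.1.1 p.1.2.1 p.1.2.2,
    expDiff (p.2.1.1 + p.1.1 / 2 - 1 / 2) (p.2.1.2.1 + p.1.2.1 / 2 - 1 / 2)
      (p.2.1.2.2 + p.1.2.2 / 2 - 1))

/-- The values at `x` of linear forms vanishing at `0, 1, ∞`: a Möbius map permuting these points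
permutes the entries up to a common factor. -/
def anharmonicVec (p : Xset) : Fin 3 → ℂ := ![p.2.2.1, 1 - p.2.2.1, -1]

def ActsAs (g : Perm Xset) (m : ℤˣ × SignedPerm 3) : Prop :=
  ∀ p, coords (g p) = m • coords p ∧
    ∃ t : ℂ, anharmonicVec (g p) = t • (inr m.2.right : SignedPerm 3) • anharmonicVec p

lemma actsAs_s0 : ActsAs s0 (-1, 1) := by
  rintro ⟨⟨k, l, m⟩, ⟨a, b, c⟩, ⟨x, hx⟩⟩
  refine ⟨?_, 1, by simp only [one_right, map_one, one_smul]; rfl⟩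
  change coords (f0 _) = _
  simp only [coords, f0, prod_smul_def, expDiff, one_smul, Units.val_neg,
    Units.val_one, Int.cast_neg, Int.cast_one, neg_one_smul, neg_cons, neg_empty, Prod.mk.injEq]
  exact ⟨vec3_eq (by ring) (by ring) (by ring), vec3_eq (by ring) (by ring) (by ring)⟩

lemma actsAs_s1 : ActsAs s1 (1, inr (swap 1 2)) := by
  rintro ⟨⟨k, l, m⟩, ⟨a, b, c⟩, ⟨x, hx⟩⟩
  have hx1 : x - 1 ≠ 0 := sub_ne_zero.mpr hx.2
  refine ⟨?_, 1 / (x - 1), ?_⟩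
  · change coords (f1 _) = _
    simp only [coords, f1, prod_smul_def, expDiff, inr_swap_one_two_smul,
      Units.val_one, Int.cast_one, one_smul, Prod.mk.injEq]
    push_cast
    exact ⟨vec3_eq (by ring) (by ring) (by ring), vec3_eq (by ring) (by ring) (by ring)⟩
  · change anharmonicVec (f1 _) = _
    simp only [anharmonicVec, f1, right_inr, inr_swap_one_two_smul, smul_cons, smul_empty,
      smul_eq_mul]
    exact vec3_eq (by field_simp) (by field_simp; ring) (by field_simp; ring)

lemma actsAs_s2 : ActsAs s2 (1, inr (swap 0 1)) := by
  rintro ⟨⟨k, l, m⟩, ⟨a, b, c⟩, ⟨x, hx⟩⟩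
  refine ⟨?_, 1, ?_⟩
  · change coords (f2 _) = _
    simp only [coords, f2, prod_smul_def, expDiff, inr_swap_zero_one_smul,
      Units.val_one, Int.cast_one, one_smul, Prod.mk.injEq]
    push_cast
    exact ⟨vec3_eq (by ring) (by ring) (by ring), vec3_eq (by ring) (by ring) (by ring)⟩
  · change anharmonicVec (f2 _) = _
    simp only [anharmonicVec, f2, right_inr, inr_swap_zero_one_smul, one_smul, sub_sub_cancel]

lemma actsAs_s3 : ActsAs s3 (1, inl (Pi.mulSingle 2 (-1))) := by
  rintro ⟨⟨k, l, m⟩, ⟨a, b, c⟩, ⟨x, hx⟩⟩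
  refine ⟨?_, 1, by simp only [right_inl, map_one, one_smul]; rfl⟩
  change coords (f3 _) = _
  simp only [coords, f3, prod_smul_def, expDiff, inl_mulSingle_two_smul,
    Units.val_one, Int.cast_one, one_smul, Prod.mk.injEq]
  exact ⟨vec3_eq (by ring) (by ring) (by ring), vec3_eq (by ring) (by ring) (by ring)⟩

def actsAsGraph : Subgroup (Perm Xset × (ℤˣ × SignedPerm 3)) where
  carrier := {q | ActsAs q.1 q.2}
  one_mem' p := ⟨by simp, 1, by simp⟩
  mul_mem' {q q'} hq hq' p := by
    obtain ⟨h, t, ht⟩ := hq (q'.1 p)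
    obtain ⟨h', t', ht'⟩ := hq' p
    refine ⟨by rw [Prod.fst_mul, Prod.snd_mul, Perm.mul_apply, mul_smul, h, h'], t * t', ?_⟩
    show _ = (t * t') • inr (q.2.2.right * q'.2.2.right) • _
    rw [Prod.fst_mul, Perm.mul_apply, ht, ht', smul_comm _ t', map_mul]
    simp only [smul_smul]
  inv_mem' {q} hq p := by
    obtain ⟨h, t, ht⟩ := hq (q.1⁻¹ p)
    rw [show q.1 (q.1⁻¹ p) = p from q.1.apply_symm_apply p] at h ht
    have ht0 : t ≠ 0 := by
      rintro rfl
      simpa [anharmonicVec] using congrFun ht 2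
    refine ⟨eq_inv_smul_iff.mpr h.symm, t⁻¹, ?_⟩
    show _ = t⁻¹ • inr q.2.2.right⁻¹ • _
    rw [ht, smul_comm _ t, smul_smul, inv_mul_cancel₀ ht0, one_smul, map_inv, inv_smul_smul]
    rfl

lemma eq_of_coords_eq {p q : Xset} {t t' : ℂ} {w : Fin 3 → ℂ} (h : coords p = coords q)
    (hp : anharmonicVec p = t • w) (hq : anharmonicVec q = t' • w) : p = q := by
  obtain ⟨⟨k, l, m⟩, ⟨a, b, c⟩, ⟨x, hx⟩⟩ := p
  obtain ⟨⟨k', l', m'⟩, ⟨a', b', c'⟩, ⟨x', hx'⟩⟩ := q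
  simp only [coords, Prod.mk.injEq, expDiff_inj, Int.cast_inj] at h
  obtain ⟨⟨rfl, rfl, rfl⟩, ha, hb, hc⟩ := h
  obtain rfl : x = x' := by
    have e0 := congrFun hp 0
    have e2 := congrFun hp 2
    have f0 := congrFun hq 0
    have f2 := congrFun hq 2
    simp only [anharmonicVec, Pi.smul_apply, smul_eq_mul, Fin.isValue, cons_val] at e0 e2 f0 f2
    have hw : w 2 ≠ 0 := by
      rintro hw
      simp [hw] at e2
    rw [e0, f0, mul_right_cancel₀ hw (e2.symm.trans f2)]
  simp only [Prod.mk.injEq, true_and, and_true]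
  exact ⟨by linear_combination ha, by linear_combination hb, by linear_combination hc⟩

lemma injOn_snd_actsAsGraph :
    Set.InjOn Prod.snd (actsAsGraph : Set (Perm Xset × (ℤˣ × SignedPerm 3))) := by
  rintro ⟨g, m⟩ hg ⟨g', m'⟩ hg' (rfl : m = m')
  refine Prod.ext (Perm.ext fun p => ?_) rfl
  obtain ⟨h, t, ht⟩ := hg p
  obtain ⟨h', t', ht'⟩ := hg' p
  exact eq_of_coords_eq (h.trans h'.symm) ht ht'

noncomputable def testPoint : Xset := ⟨⟨1, 1, 0⟩, ⟨0, -4, 0⟩, ⟨2, by norm_num⟩⟩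

lemma coords_testPoint : coords testPoint = (![0, -2, 0], ![1, 3, 4]) := by
  norm_num [coords, testPoint, expDiff]

lemma eq_one_of_smul_coords_testPoint {m : ℤˣ × SignedPerm 3}
    (h : m • coords testPoint = coords testPoint) : m = 1 := by
  rw [coords_testPoint, prod_smul_def, Prod.mk.injEq] at h
  have hb : m.2 = 1 := SignedPerm.eq_one_of_smul_eq_self (by simp [Fin.forall_fin_succ])
    (by intro i j; fin_cases i <;> fin_cases j <;> norm_num) h.2
  rw [hb, one_smul] at h
  have hε : ((m.1 : ℤ) : ℂ) * -2 = -2 := by simpa using congrFun h.1 1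
  exact Prod.ext (Units.val_eq_one.mp (by exact_mod_cast (mul_eq_right₀ (by norm_num)).mp hε)) hb

lemma injOn_fst_actsAsGraph :
    Set.InjOn Prod.fst (actsAsGraph : Set (Perm Xset × (ℤˣ × SignedPerm 3))) := by
  rintro ⟨g, m⟩ hg ⟨g', m'⟩ hg' (rfl : g = g')
  refine Prod.ext rfl (inv_mul_eq_one.mp ?_).symm
  apply eq_one_of_smul_coords_testPoint
  rw [mul_smul, inv_smul_eq_iff, ← (hg testPoint).1, ← (hg' testPoint).1]

end Xset

open Xset SemidirectProduct in
/-- The group generated by `σ₀, σ₁, σ₂, σ₃` has exactly 96 elements. -/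
theorem stmt17 :
    Nat.card (Subgroup.closure {Xset.s0, Xset.s1, Xset.s2, Xset.s3} :
      Subgroup (Equiv.Perm Xset)) = 96 := by
  have hS : {(s0, (-1, 1)), (s1, (1, inr (swap 1 2))), (s2, (1, inr (swap 0 1))),
      (s3, (1, inl (Pi.mulSingle 2 (-1))))} ⊆
      (actsAsGraph : Set (Perm Xset × (ℤˣ × SignedPerm 3))) := by
    simp only [Set.insert_subset_iff, Set.singleton_subset_iff]
    exact ⟨actsAs_s0, actsAs_s1, actsAs_s2, actsAs_s3⟩
  have hgen : Subgroup.closure {((-1 : ℤˣ), (1 : SignedPerm 3)), (1, inr (swap 1 2)),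
      (1, inr (swap 0 1)), (1, inl (Pi.mulSingle 2 (-1)))} = ⊤ := by
    refine Subgroup.eq_top_of_neg_one_mem (Subgroup.subset_closure (by simp))
      (SignedPerm.eq_top_of_mem (Subgroup.subset_closure (by simp)) fun i => ?_)
    fin_cases i <;> exact Subgroup.subset_closure (by simp)
  have hcard :=
    Subgroup.card_closure_image_fst_eq _ injOn_fst_actsAsGraph injOn_snd_actsAsGraph hS
  simp only [Set.image_insert_eq, Set.image_singleton] at hcard
  rw [hcard, hgen, Subgroup.card_top, Nat.card_prod, SignedPerm.card]
  simp [Nat.card_eq_fintype_card, Fintype.card_units_int, Nat.factorial]
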